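/- arXiv:2110.12578 — 6 statements merged into one kernel-verified Lean document; each statement's English description precedes it below -/
import Mathlib

section
/- Two plans that are permutations of each other and induce the same partial order ≺ admit the same set of trains reaching their destinations: for every train, its subsequence of actions (its path) is identical in both plans. -/
/-- `a` and `b` are consecutive actions of the same train along its path in the plan `π`. -/
def consecSameTrain {T R : Type} [DecidableEq T] (π : List (T × R)) (a b : T × R) : Prop :=
  ∃ l₁ l₂ : List (T × R), π.filter (fun x => decide (x.1 = a.1)) = l₁ ++ [a, b] ++ l₂

/-- `a` and `b` are actions on conflicting routes, appearing in `π` in this order. -/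
def conflictOrder {T R : Type} [DecidableEq T] [DecidableEq R]
    (Conflicts : R → R → Prop) (π : List (T × R)) (a b : T × R) : Prop :=
  a ∈ π ∧ b ∈ π ∧ π.idxOf a < π.idxOf b ∧ Conflicts a.2 b.2

/-- The plan order ≺_π. -/
def planOrder {T R : Type} [DecidableEq T] [DecidableEq R]
    (Conflicts : R → R → Prop) (π : List (T × R)) : (T × R) → (T × R) → Prop :=
  Relation.TransGen (fun a b => consecSameTrain π a b ∨ conflictOrder Conflicts π a b)

/-!
Along each train's path consecutive actions are related by `≺_π`, so by transitivity a train's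
subsequence is a chain for `≺_π`. Every generating step of `≺_π` moves strictly forward in the
duplicate-free list `π`, so `≺_π` is irreflexive. Hence the subsequences of `t` in `π₁` and `π₂`
are permutations of each other that are both sorted by the same strict order, and must coincide.
-/

namespace List

theorem idxOf_lt_idxOf_of_pair_sublist {α : Type*} [BEq α] [LawfulBEq α] {a b : α} :
    ∀ {l : List α}, l.Nodup → [a, b] <+ l → l.idxOf a < l.idxOf b
  | [], _, h => absurd h.length_le (by simp)
  | x :: l, hl, h => by
    obtain ⟨hx, hl⟩ := nodup_cons.mp hl
    have hbx : x ≠ b := by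
      rintro rfl
      exact hx (h.tail.subset (by simp))
    rcases sublist_cons_iff.mp h with h | ⟨r, hr, -⟩
    · have hax : x ≠ a := by
        rintro rfl
        exact hx (h.subset (by simp))
      rw [idxOf_cons_ne l hax, idxOf_cons_ne l hbx]
      exact Nat.succ_lt_succ (idxOf_lt_idxOf_of_pair_sublist hl h)
    · obtain ⟨rfl, -⟩ := cons_eq_cons.mp hr
      rw [idxOf_cons_self, idxOf_cons_ne l hbx]
      exact Nat.succ_pos _

end List

section PlanOrder

variable {T R : Type} [DecidableEq T]

theorem consecSameTrain_of_filter_eq {π : List (T × R)} {t : T} {a b : T × R}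
    {l₁ l₂ : List (T × R)} (h : π.filter (fun x => decide (x.1 = t)) = l₁ ++ a :: b :: l₂) :
    consecSameTrain π a b := by
  have ha : a ∈ π.filter (fun x => decide (x.1 = t)) := by simp [h]
  have hat : a.1 = t := by simpa using (List.mem_filter.mp ha).2
  exact ⟨l₁, l₂, by simpa [hat] using h⟩

theorem consecSameTrain.pair_sublist {π : List (T × R)} {a b : T × R}
    (h : consecSameTrain π a b) : [a, b].Sublist π := by
  obtain ⟨l₁, l₂, h⟩ := h
  exact ((List.infix_append l₁ [a, b] l₂).sublist.trans (h ▸ List.filter_sublist))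

theorem idxOf_lt_idxOf_of_planOrder [DecidableEq R] {Conflicts : R → R → Prop}
    {π : List (T × R)} (hnd : π.Nodup) {a b : T × R} (h : planOrder Conflicts π a b) :
    π.idxOf a < π.idxOf b := by
  have hstep : ∀ {a b}, (consecSameTrain π a b ∨ conflictOrder Conflicts π a b) →
      π.idxOf a < π.idxOf b := by
    rintro a b (h | ⟨-, -, h, -⟩)
    exacts [List.idxOf_lt_idxOf_of_pair_sublist hnd h.pair_sublist, h]
  induction h with
  | single h => exact hstep h
  | tail _ h ih => exact ih.trans (hstep h)

theorem planOrder_irrefl [DecidableEq R] {Conflicts : R → R → Prop} {π : List (T × R)}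
    (hnd : π.Nodup) (a : T × R) : ¬ planOrder Conflicts π a a :=
  fun h => (idxOf_lt_idxOf_of_planOrder hnd h).false

theorem pairwise_planOrder_filter_train [DecidableEq R] (Conflicts : R → R → Prop)
    (π : List (T × R)) (t : T) :
    (π.filter (fun x => decide (x.1 = t))).Pairwise (planOrder Conflicts π) := by
  have : Trans (planOrder Conflicts π) (planOrder Conflicts π) (planOrder Conflicts π) :=
    ⟨Relation.TransGen.trans⟩
  have hchain : (π.filter (fun x => decide (x.1 = t))).IsChain (planOrder Conflicts π) :=
    List.isChain_iff_forall_rel_of_append_cons_cons.mpr fun _ _ _ _ h =>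
      .single (.inl (consecSameTrain_of_filter_eq h))
  exact hchain.pairwise

end PlanOrder

theorem stmt1_general {T R : Type} [DecidableEq T] [DecidableEq R]
    (Conflicts : R → R → Prop)
    (π₁ π₂ : List (T × R)) (hperm : π₁.Perm π₂) (hnd : π₁.Nodup)
    (horder : planOrder Conflicts π₁ = planOrder Conflicts π₂) :
    ∀ t : T, π₁.filter (fun x => decide (x.1 = t)) = π₂.filter (fun x => decide (x.1 = t)) := by
  intro t
  have hsorted₂ := pairwise_planOrder_filter_train Conflicts π₂ t
  rw [← horder] at hsorted₂
  exact (hperm.filter _).eq_of_pairwise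
    (fun a _ _ _ hab hba => absurd (hab.trans hba) (planOrder_irrefl hnd a))
    (pairwise_planOrder_filter_train Conflicts π₁ t) hsorted₂

/-- two plans that are permutations of each other (same distinct
actions) inducing the same partial order have, for each train, identical
subsequences of actions (identical train paths). -/
theorem stmt1 {T R : Type} [DecidableEq T] [DecidableEq R]
    (Conflicts : R → R → Prop)
    (hirr : ∀ r, ¬ Conflicts r r)
    (hsym : ∀ a b, Conflicts a b → Conflicts b a)
    (π₁ π₂ : List (T × R)) (hperm : π₁.Perm π₂) (hnd : π₁.Nodup)
    (horder : planOrder Conflicts π₁ = planOrder Conflicts π₂) :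
    ∀ t : T, π₁.filter (fun x => decide (x.1 = t)) = π₂.filter (fun x => decide (x.1 = t)) :=
  stmt1_general Conflicts π₁ π₂ hperm hnd horder
end

section
/- Any linear extension of the partial order ≺_π of a correct plan π is itself a plan inducing the same partial order: if σ is a permutation of π such that whenever a ≺_π b then a precedes b in σ, then ≺_σ = ≺_π. -/
/-!
Each train's actions form a chain of consecutive pairs, which are `≺_π`-related, so σ lists them
in the same order as π: the per-train subsequences of σ and π coincide, and with them the
same-train relations. Conflicting actions are `≺_π`-ordered one way or the other (conflicts are
symmetric), so σ keeps their order too, and the two conflict relations also coincide.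
-/

open Relation

lemma List.Nodup.pairwise_idxOf_lt {α : Type*} [BEq α] [LawfulBEq α] {l : List α} (hl : l.Nodup) :
    l.Pairwise (fun a b => l.idxOf a < l.idxOf b) := by
  rw [List.pairwise_iff_getElem]
  intro i j hi hj hij
  rwa [hl.idxOf_getElem i hi, hl.idxOf_getElem j hj]

section PlanOrder

variable {T R : Type} [DecidableEq T] {π σ : List (T × R)}

lemma consecSameTrain_iff_of_filter_train_eq
    (hfilt : ∀ t : T, σ.filter (fun x => decide (x.1 = t)) = π.filter (fun x => decide (x.1 = t)))
    (a b : T × R) : consecSameTrain σ a b ↔ consecSameTrain π a b := by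
  rw [consecSameTrain, consecSameTrain, hfilt]

variable [DecidableEq R] {Conflicts : R → R → Prop}

lemma planOrder_pairwise_filter_train (t : T) :
    (π.filter (fun x => decide (x.1 = t))).Pairwise (planOrder Conflicts π) := by
  have : IsTrans (T × R) (planOrder Conflicts π) := ⟨fun _ _ _ => TransGen.trans⟩
  rw [← List.isChain_iff_pairwise, List.isChain_iff_forall_rel_of_append_cons_cons]
  intro a b l₁ l₂ hsplit
  have hat : a.1 = t := by
    have ha : a ∈ π.filter (fun x => decide (x.1 = t)) := by simp [hsplit]
    simpa using (List.mem_filter.1 ha).2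
  exact TransGen.single (Or.inl ⟨l₁, l₂, by simpa [hat] using hsplit⟩)

lemma filter_train_eq_of_extends_planOrder (hperm : σ.Perm π) (hnd : σ.Nodup)
    (hext : ∀ a b, planOrder Conflicts π a b → σ.idxOf a < σ.idxOf b) (t : T) :
    σ.filter (fun x => decide (x.1 = t)) = π.filter (fun x => decide (x.1 = t)) :=
  (hperm.filter _).eq_of_pairwise (le := fun a b => σ.idxOf a < σ.idxOf b)
    (fun _ _ _ _ hab hba => (lt_asymm hab hba).elim)
    (hnd.pairwise_idxOf_lt.sublist List.filter_sublist)
    ((planOrder_pairwise_filter_train t).imp (hext _ _))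

lemma conflictOrder_iff_of_extends_planOrder
    (hsym : ∀ a b, Conflicts a b → Conflicts b a) (hperm : σ.Perm π)
    (hext : ∀ a b, planOrder Conflicts π a b → σ.idxOf a < σ.idxOf b) (a b : T × R) :
    conflictOrder Conflicts σ a b ↔ conflictOrder Conflicts π a b := by
  constructor
  · rintro ⟨ha, hb, hσ, hc⟩
    have haπ := hperm.subset ha
    have hbπ := hperm.subset hb
    refine ⟨haπ, hbπ, ?_, hc⟩
    rcases lt_trichotomy (π.idxOf a) (π.idxOf b) with hπ | hπ | hπ
    · exact hπ
    · rw [(List.idxOf_inj haπ).1 hπ] at hσ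
      exact (lt_irrefl _ hσ).elim
    · have := hext b a (TransGen.single (Or.inr ⟨hbπ, haπ, hπ, hsym _ _ hc⟩))
      exact (lt_asymm hσ this).elim
  · intro h
    exact ⟨hperm.mem_iff.2 h.1, hperm.mem_iff.2 h.2.1, hext a b (TransGen.single (Or.inr h)),
      h.2.2.2⟩

end PlanOrder

theorem stmt2_general {T R : Type} [DecidableEq T] [DecidableEq R]
    (Conflicts : R → R → Prop)
    (hsym : ∀ a b, Conflicts a b → Conflicts b a)
    (π σ : List (T × R)) (hperm : σ.Perm π) (hnd : π.Nodup)
    (hext : ∀ a b, planOrder Conflicts π a b → σ.idxOf a < σ.idxOf b) :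
    planOrder Conflicts σ = planOrder Conflicts π := by
  have hconsec := consecSameTrain_iff_of_filter_train_eq
    (filter_train_eq_of_extends_planOrder hperm (hperm.nodup_iff.2 hnd) hext)
  have hconflict := conflictOrder_iff_of_extends_planOrder hsym hperm hext
  ext a b
  constructor
  · exact TransGen.mono (fun x y => Or.imp (hconsec x y).1 (hconflict x y).1) a b
  · exact TransGen.mono (fun x y => Or.imp (hconsec x y).2 (hconflict x y).2) a b

/-- any linear extension σ of the partial order ≺_π of a plan π
(a permutation of π whose linear order extends ≺_π) induces the same partial
order: ≺_σ = ≺_π. -/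
theorem stmt2 {T R : Type} [DecidableEq T] [DecidableEq R]
    (Conflicts : R → R → Prop)
    (hirr : ∀ r, ¬ Conflicts r r)
    (hsym : ∀ a b, Conflicts a b → Conflicts b a)
    (π σ : List (T × R)) (hperm : σ.Perm π) (hnd : π.Nodup)
    (hext : ∀ a b, planOrder Conflicts π a b → σ.idxOf a < σ.idxOf b) :
    planOrder Conflicts σ = planOrder Conflicts π :=
  stmt2_general Conflicts hsym π σ hperm hnd hext
end

section
/- In a parallel plan (a sequence of sets of actions, where each set may be executed in one step), if in every step each executed action either belongs to the first step or has some conflicting action executed in the immediately preceding step (maximal progress), then the number of steps is at most 1 plus the length of the longest chain in the conflict-dependency partial order among actions. -/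
/-! Under maximal progress, any action of step `n` can be traced back through one
dependency-predecessor in each earlier step, which yields a `D`-chain of `n + 1` actions of the
plan; applied to an action of the last step this bounds the number of steps. -/

theorem exists_backward_chain_of_maximal_progress {A : Type*} {D : A → A → Prop} {k : ℕ}
    {S : Fin k → Set A}
    (hmp : ∀ (n : ℕ) (hn : n + 1 < k), ∀ a ∈ S ⟨n + 1, hn⟩, ∃ b ∈ S ⟨n, by omega⟩, D b a) :
    ∀ (n : ℕ) (hn : n < k), ∀ a ∈ S ⟨n, hn⟩, ∃ l : List A,
      (a :: l).IsChain (flip D) ∧ (∀ x ∈ a :: l, ∃ i, x ∈ S i) ∧ l.length = n := by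
  intro n
  induction n with
  | zero => exact fun _ a ha => ⟨[], .singleton a, by simpa using ⟨_, ha⟩, rfl⟩
  | succ n ih =>
    intro hn a ha
    obtain ⟨b, hb, hba⟩ := hmp n hn a ha
    obtain ⟨l, hchain, hmem, hlen⟩ := ih (by omega) b hb
    exact ⟨b :: l, hchain.cons_cons hba, List.forall_mem_cons.2 ⟨⟨_, ha⟩, hmem⟩,
      by simp [hlen]⟩

/-- in a parallel plan S₁,…,S_k (pairwise disjoint nonempty sets of
actions) satisfying maximal progress (every action in a step i ≥ 2 has a
dependency-predecessor executed in step i−1), the number of steps k is at most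
1 plus the length (number of D-edges, i.e. `M`) of the longest chain in the
dependency relation D among actions of the plan. -/
theorem stmt3 {A : Type} (D : A → A → Prop) (k M : ℕ) (S : Fin k → Set A)
    (hne : ∀ i, (S i).Nonempty)
    (hmp : ∀ i : Fin k, 1 ≤ i.val → ∀ a ∈ S i,
      ∃ b ∈ S ⟨i.val - 1, by have := i.isLt; omega⟩, D b a)
    (hM : ∀ l : List A, l.Chain' D → (∀ a ∈ l, ∃ i, a ∈ S i) → l.length ≤ M + 1) :
    k ≤ 1 + M := by
  rcases Nat.eq_zero_or_pos k with hk | hk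
  · omega
  obtain ⟨a, ha⟩ := hne ⟨k - 1, by omega⟩
  obtain ⟨l, hchain, hmem, hlen⟩ :=
    exists_backward_chain_of_maximal_progress
      (fun n hn => hmp ⟨n + 1, hn⟩ n.succ_pos) (k - 1) (by omega) a ha
  have := hM (a :: l).reverse (List.isChain_reverse.2 hchain)
    fun x hx => hmem x (List.mem_reverse.1 hx)
  simp only [List.length_reverse, List.length_cons] at this
  omega
end

section
/- In an acyclic route graph, the local path-consistency condition implies global path structure: if a train's set of occupied routes is such that every occupied route other than an initial one has a predecessor (a route whose exit delimiter equals its entry delimiter) that is also occupied by the same train, and at most one occupied route departs from any delimiter, then the occupied routes of that train form a union of directed paths each starting at an initially occupied route. -/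
/-!
Acyclicity of the successor relation on a finite set of routes makes it well founded, so one
can induct along it: an occupied route is either initial, or extends the path that ends at its
occupied predecessor. Any chain of an acyclic relation is a simple path, since a repeated
route would close a cycle.
-/

/-- Route `b` succeeds route `a` when the exit delimiter of `a` equals the
entry delimiter of `b` (both non-null). -/
def routeSucc {R D : Type} (exit entry : R → Option D) (a b : R) : Prop :=
  ∃ d : D, exit a = some d ∧ entry b = some d

open Relation

theorem Finite.wellFounded_of_acyclic {α : Type*} [Finite α] {r : α → α → Prop}
    (hr : ∀ a, ¬ TransGen r a a) : WellFounded r :=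
  have : Std.Irrefl (TransGen r) := ⟨hr⟩
  Subrelation.wf TransGen.single (Finite.wellFounded_of_trans_of_irrefl (TransGen r))

theorem List.IsChain.nodup_of_acyclic {α : Type*} {r : α → α → Prop}
    (hr : ∀ a, ¬ TransGen r a a) {l : List α} (hl : l.IsChain r) : l.Nodup :=
  have : Std.Irrefl (TransGen r) := ⟨hr⟩
  (List.isChain_iff_pairwise.1 (hl.imp fun _ _ => TransGen.single)).nodup

theorem WellFounded.exists_isChain_of_forall_exists_pred {α : Type*} {r : α → α → Prop}
    (hwf : WellFounded r) {S I : Set α} (hpred : ∀ a ∈ S, a ∉ I → ∃ b ∈ S, r b a)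
    {a : α} (ha : a ∈ S) :
    ∃ l : List α, l.IsChain r ∧ (∀ x ∈ l, x ∈ S) ∧ (∃ i ∈ I, l.head? = some i) ∧
      l.getLast? = some a := by
  induction a using hwf.induction with
  | _ a ih =>
    by_cases haI : a ∈ I
    · exact ⟨[a], .singleton a, by simpa using ha, ⟨a, haI, rfl⟩, rfl⟩
    obtain ⟨b, hbS, hba⟩ := hpred a ha haI
    obtain ⟨l, hchain, hlS, ⟨i, hiI, hhead⟩, hlast⟩ := ih b hba hbS
    refine ⟨l ++ [a], ?_, ?_, ⟨i, hiI, ?_⟩, List.getLast?_concat⟩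
    · exact hchain.append (.singleton a) (by simpa [hlast] using hba)
    · simpa [or_imp, forall_and] using ⟨hlS, ha⟩
    · simp [List.head?_append, hhead]

theorem stmt6_general {R D : Type} [Fintype R] (entry exit : R → Option D)
    (hacyc : ∀ r : R, ¬ Relation.TransGen (routeSucc exit entry) r r)
    (S I : Set R)
    (h1 : ∀ r ∈ S, r ∉ I → ∃ s ∈ S, routeSucc exit entry s r) :
    ∀ r ∈ S, ∃ l : List R, l.Nodup ∧ l.Chain' (routeSucc exit entry) ∧
      (∀ x ∈ l, x ∈ S) ∧ (∃ s ∈ I, l.head? = some s) ∧ l.getLast? = some r := by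
  intro r hr
  obtain ⟨l, hchain, hlS, hhead, hlast⟩ :=
    (Finite.wellFounded_of_acyclic hacyc).exists_isChain_of_forall_exists_pred h1 hr
  exact ⟨l, hchain.nodup_of_acyclic hacyc, hchain, hlS, hhead, hlast⟩

/-- in a finite acyclic route graph, local path-consistency implies
global path structure.  If every occupied route outside the initial set has an
occupied predecessor, and at most one occupied route departs from any
delimiter, then the occupied routes form a union of (simple) directed paths,
each starting at an initially occupied route: every occupied route lies at the
end of a simple directed path of occupied routes starting in `I`. -/
theorem stmt6 {R D : Type} [Fintype R] (entry exit : R → Option D)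
    (hacyc : ∀ r : R, ¬ Relation.TransGen (routeSucc exit entry) r r)
    (S I : Set R) (hIS : I ⊆ S) (hne : I.Nonempty)
    (h1 : ∀ r ∈ S, r ∉ I → ∃ s ∈ S, routeSucc exit entry s r)
    (h2 : ∀ d : D, ∀ r ∈ S, ∀ r' ∈ S, entry r = some d → entry r' = some d → r = r') :
    ∀ r ∈ S, ∃ l : List R, l.Nodup ∧ l.Chain' (routeSucc exit entry) ∧
      (∀ x ∈ l, x ∈ S) ∧ (∃ s ∈ I, l.head? = some s) ∧ l.getLast? = some r :=
  stmt6_general entry exit hacyc S I h1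
end

section
/- The freeable predicate correctly characterizes path length: freeable_t(a, l) holds for occupation o if and only if either there is a directed path a = r₀, r₁, …, r_m of routes all occupied by t (except possibly a) with Σ_{i=0}^{m−1} routeLength(r_i) ≥ l, or there is such a path occupied by t ending in a route with exit = null. -/
/-- The `freeable` predicate (inductive rendering of the recursive definition,
the two coincide on a finite acyclic route graph). -/
inductive Freeable {R D T : Type} (exit entry : R → Option D) (len : R → ℝ)
    (occ : R → Option T) (t : T) : R → ℝ → Prop
  | exit_null (a : R) (l : ℝ) : exit a = none → Freeable exit entry len occ t a l
  | nonpos (a : R) (l : ℝ) : l ≤ 0 → Freeable exit entry len occ t a l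
  | step (a b : R) (l : ℝ) (d : D) : exit a = some d → entry b = some d →
      occ b = some t → Freeable exit entry len occ t b (l - len a) →
      Freeable exit entry len occ t a l

section FreeingPath

variable {R D T : Type} (exit entry : R → Option D) (len : R → ℝ) (occ : R → Option T) (t : T)

def IsFreeingPath (a : R) (l : ℝ) (p : List R) : Prop :=
  p.head? = some a ∧ p.IsChain (routeSucc exit entry) ∧ (∀ x ∈ p.tail, occ x = some t) ∧
    (l ≤ (p.dropLast.map len).sum ∨ ∃ b : R, p.getLast? = some b ∧ exit b = none)

variable {exit entry len occ t}

theorem IsFreeingPath.exists_eq_cons {a : R} {l : ℝ} {p : List R}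
    (hp : IsFreeingPath exit entry len occ t a l p) : ∃ q, p = a :: q := by
  obtain ⟨hhead, -⟩ := hp
  cases p with
  | nil => simp at hhead
  | cons x q => exact ⟨q, by simpa using hhead⟩

theorem isFreeingPath_singleton_iff {a : R} {l : ℝ} :
    IsFreeingPath exit entry len occ t a l [a] ↔ l ≤ 0 ∨ exit a = none := by
  simp [IsFreeingPath]

theorem isFreeingPath_cons_cons_iff {a b : R} {l : ℝ} {q : List R} :
    IsFreeingPath exit entry len occ t a l (a :: b :: q) ↔
      routeSucc exit entry a b ∧ occ b = some t ∧
        IsFreeingPath exit entry len occ t b (l - len a) (b :: q) := by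
  have hdrop : (a :: b :: q).dropLast = a :: (b :: q).dropLast := rfl
  simp only [IsFreeingPath, List.head?_cons, List.isChain_cons_cons, List.tail_cons,
    List.forall_mem_cons, hdrop, List.map_cons, List.sum_cons, List.getLast?_cons_cons,
    sub_le_iff_le_add']
  tauto

theorem Freeable.exists_isFreeingPath {a : R} {l : ℝ}
    (h : Freeable exit entry len occ t a l) : ∃ p, IsFreeingPath exit entry len occ t a l p := by
  induction h with
  | exit_null a l ha => exact ⟨[a], isFreeingPath_singleton_iff.2 (Or.inr ha)⟩
  | nonpos a l hl => exact ⟨[a], isFreeingPath_singleton_iff.2 (Or.inl hl)⟩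
  | step a b l d hx he hb _ ih =>
    obtain ⟨p, hp⟩ := ih
    obtain ⟨q, rfl⟩ := hp.exists_eq_cons
    exact ⟨a :: b :: q, isFreeingPath_cons_cons_iff.2 ⟨⟨d, hx, he⟩, hb, hp⟩⟩

theorem IsFreeingPath.freeable {a : R} {l : ℝ} {p : List R}
    (hp : IsFreeingPath exit entry len occ t a l p) : Freeable exit entry len occ t a l := by
  obtain ⟨q, rfl⟩ := hp.exists_eq_cons
  induction q generalizing a l with
  | nil =>
    exact (isFreeingPath_singleton_iff.1 hp).elim (Freeable.nonpos a l) (Freeable.exit_null a l)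
  | cons b q ih =>
    obtain ⟨⟨d, hx, he⟩, hb, hq⟩ := isFreeingPath_cons_cons_iff.1 hp
    exact Freeable.step a b l d hx he hb (ih hq)

end FreeingPath

theorem stmt8_general {R D T : Type} (exit entry : R → Option D)
    (len : R → ℝ) (occ : R → Option T) (t : T)
    (a : R) (l : ℝ) :
    Freeable exit entry len occ t a l ↔
      ∃ p : List R, p.head? = some a ∧ p.Chain' (routeSucc exit entry) ∧
        (∀ x ∈ p.tail, occ x = some t) ∧
        (l ≤ (p.dropLast.map len).sum ∨
          ∃ b : R, p.getLast? = some b ∧ exit b = none) :=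
  ⟨Freeable.exists_isFreeingPath, fun ⟨_, hp⟩ => IsFreeingPath.freeable hp⟩

/-- the freeable predicate characterizes path length.
`freeable_t(a, l)` holds iff there is a directed path `a = r₀, r₁, …, r_m`
whose routes (except possibly `a` itself) are all occupied by `t`, such that
either `Σ_{i<m} routeLength(r_i) ≥ l`, or the path ends in a route with
null exit. -/
theorem stmt8 {R D T : Type} [Fintype R] (exit entry : R → Option D)
    (len : R → ℝ) (occ : R → Option T) (t : T)
    (hpos : ∀ r, 0 < len r)
    (hacyc : ∀ r : R, ¬ Relation.TransGen (routeSucc exit entry) r r)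
    (a : R) (l : ℝ) :
    Freeable exit entry len occ t a l ↔
      ∃ p : List R, p.head? = some a ∧ p.Chain' (routeSucc exit entry) ∧
        (∀ x ∈ p.tail, occ x = some t) ∧
        (l ≤ (p.dropLast.map len).sum ∨
          ∃ b : R, p.getLast? = some b ∧ exit b = none) :=
  stmt8_general exit entry len occ t a l
end

section
/- Two trains on opposite ends of a single linear corridor with no sidings, each needing to exit at the other end, are bound for deadlock: no correct plan exists, regardless of corridor length n ≥ 1. -/
/-!
Train `0` can never overtake train `1`: in the initial state all routes held by `0` lie to the
left of all routes held by `1`, and a step preserves this because a train only claims the free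
route directly ahead of its own front, so `0` cannot jump over a route held by `1` (nor
vice versa). A goal state would put a route of `0` (the last one) to the right of a route of
`1` (the first one).
-/

/-- One transition of the two-train corridor system on routes `0, …, n−1`.
Train `0` travels rightward, train `1` leftward.  A moving train extends its
occupation by exactly the adjacent route in its travel direction (which must
be free), and may simultaneously free some of its own routes (trains free
routes only behind their front; freeing more routes only makes more behavior
possible).  Trains cannot move backward. -/
inductive CorStep (n : ℕ) : (ℕ → Option (Fin 2)) → (ℕ → Option (Fin 2)) → Prop
  | moveA (o o' : ℕ → Option (Fin 2)) (i : ℕ) :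
      i + 1 < n → o i = some 0 → o (i + 1) = none →
      o' (i + 1) = some 0 →
      (∀ j, j ≠ i + 1 → o' j = o j ∨ (o j = some 0 ∧ o' j = none)) →
      CorStep n o o'
  | moveB (o o' : ℕ → Option (Fin 2)) (i : ℕ) :
      0 < i → i < n → o i = some 1 → o (i - 1) = none →
      o' (i - 1) = some 1 →
      (∀ j, j ≠ i - 1 → o' j = o j ∨ (o j = some 1 ∧ o' j = none)) →
      CorStep n o o'

def TrainsOrdered (o : ℕ → Option (Fin 2)) : Prop :=
  ∀ a b, o a = some 0 → o b = some 1 → a < b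

lemma eq_some_of_eq_or_freed {x x' : Option (Fin 2)} {c t : Fin 2}
    (h : x' = x ∨ (x = some c ∧ x' = none)) (hx' : x' = some t) : x = some t := by
  rcases h with h | ⟨-, h⟩
  · rwa [← h]
  · simp [h] at hx'

lemma CorStep.trainsOrdered {n : ℕ} {o o' : ℕ → Option (Fin 2)} (h : CorStep n o o')
    (ho : TrainsOrdered o) : TrainsOrdered o' := by
  intro a b ha hb
  cases h with
  | moveA i _ hi hfree hnew hrest =>
    have hb_ne : b ≠ i + 1 := by rintro rfl; simp [hnew] at hb
    have hb' := eq_some_of_eq_or_freed (hrest b hb_ne) hb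
    by_cases ha_eq : a = i + 1
    · have : b ≠ i + 1 := by rintro rfl; simp [hfree] at hb'
      have := ho i b hi hb'
      omega
    · exact ho a b (eq_some_of_eq_or_freed (hrest a ha_eq) ha) hb'
  | moveB i _ _ hi hfree hnew hrest =>
    have ha_ne : a ≠ i - 1 := by rintro rfl; simp [hnew] at ha
    have ha' := eq_some_of_eq_or_freed (hrest a ha_ne) ha
    by_cases hb_eq : b = i - 1
    · have : a ≠ i - 1 := by rintro rfl; simp [hfree] at ha'
      have := ho a i ha' hi
      omega
    · exact ho a b ha' (eq_some_of_eq_or_freed (hrest b hb_eq) hb)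

lemma TrainsOrdered.of_reflTransGen {n : ℕ} {o o' : ℕ → Option (Fin 2)}
    (h : Relation.ReflTransGen (CorStep n) o o') (ho : TrainsOrdered o) : TrainsOrdered o' := by
  induction h with
  | refl => exact ho
  | tail _ hstep ih => exact hstep.trainsOrdered ih

lemma trainsOrdered_of_initial {n : ℕ} {o : ℕ → Option (Fin 2)}
    (hA : o 0 = some 0) (hB : o (n - 1) = some 1)
    (hfree : ∀ j, j ≠ 0 → j ≠ n - 1 → o j = none) : TrainsOrdered o := by
  have hlen : n - 1 ≠ 0 := by rintro h; rw [h, hA] at hB; simp at hB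
  intro a b ha hb
  have ha0 : a = 0 := by
    by_contra h
    by_cases e : a = n - 1
    · rw [e, hB] at ha; simp at ha
    · rw [hfree a h e] at ha; simp at ha
  have hb0 : b = n - 1 := by
    by_contra h
    by_cases e : b = 0
    · rw [e, hA] at hb; simp at hb
    · rw [hfree b e h] at hb; simp at hb
  omega

theorem stmt9_general (n : ℕ) (o₀ : ℕ → Option (Fin 2))
    (hA : o₀ 0 = some 0) (hB : o₀ (n - 1) = some 1)
    (hfree : ∀ j, j ≠ 0 → j ≠ n - 1 → o₀ j = none) :
    ∀ o : ℕ → Option (Fin 2), Relation.ReflTransGen (CorStep n) o₀ o →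
      ¬ (o (n - 1) = some 0 ∧ o 0 = some 1) := by
  rintro o hreach ⟨hA', hB'⟩
  exact Nat.not_lt_zero _ <|
    (trainsOrdered_of_initial hA hB hfree).of_reflTransGen hreach (n - 1) 0 hA' hB'

/-- two trains on opposite ends of a single linear corridor with
no sidings, each needing to exit at the other end, are bound for deadlock:
for every corridor length n ≥ 1, from the initial state (train A on r₁, train
B on r_n, everything else free), no reachable state has train A occupying r_n
and train B occupying r₁ — in particular also no correct plan bringing both
trains past each other can exist. -/
theorem stmt9 (n : ℕ) (hn : 1 ≤ n) (o₀ : ℕ → Option (Fin 2))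
    (hA : o₀ 0 = some 0) (hB : o₀ (n - 1) = some 1)
    (hfree : ∀ j, j ≠ 0 → j ≠ n - 1 → o₀ j = none) :
    ∀ o : ℕ → Option (Fin 2), Relation.ReflTransGen (CorStep n) o₀ o →
      ¬ (o (n - 1) = some 0 ∧ o 0 = some 1) :=
  stmt9_general n o₀ hA hB hfree
end
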